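/- arXiv:2408.14705 — 4 statements merged into one kernel-verified Lean document; each statement's English description precedes it below -/
import Mathlib

section
/- Suppose nonnegative integers t_{i,j} (indexed by i,j ≥ 0 with i+j ≥ 2, finitely many nonzero) satisfy: (a) Σ ij·t_{i,j} = n(n−k); (b) Σ (C(i,2)+C(j,2))·t_{i,j} = C(n,2)+C(n−k,2); and (c) the Hirzebruch-type inequality Σ_{i+j=2} t_{i,j} + Σ_{i+j=3} t_{i,j} ≥ (2n−k) + Σ_{i+j≥5} ((i+j)−4)·t_{i,j}. Then t_{1,1} + t_{1,2} + t_{2,1} + t_{2,2} + t_{2,3} + t_{3,2} + t_{3,3} ≥ (6n − k(k+3))/4. -/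
/-!
Write `s = i + j` and `d = i - j`. Since `ij - C(i,2) - C(j,2) = (s - d²)/2`, twice identity (a)
minus twice identity (b), plus twice Hirzebruch's inequality (c), says that
`∑ w(i,j) t_{i,j} ≥ 6n - k(k+3)` for the weight
`w(i,j) = s - d² + 2·[s ∈ {2,3}] - 2·[s ≥ 5](s - 4)`.
Checking the finitely many `(i,j)` with `s ≤ 7` and noting `w = 8 - s - d² ≤ 0` for `s ≥ 8`
shows `w(i,j) ≤ 4` at the seven listed index pairs and `w(i,j) ≤ 0` at all others.
-/

lemma Finsupp.sum_mul_le_sum_mul {α R : Type*} [Semiring R] [PartialOrder R] [IsOrderedRing R]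
    (t : α →₀ ℕ) {f g : α → R} (hfg : ∀ p, f p ≤ g p) :
    t.sum (fun p v => f p * v) ≤ t.sum (fun p v => g p * v) :=
  Finset.sum_le_sum fun p _ => mul_le_mul_of_nonneg_right (hfg p) (Nat.cast_nonneg _)

lemma Finsupp.sum_ite_mem_mul {α R : Type*} [DecidableEq α] [Semiring R]
    (t : α →₀ ℕ) (S : Finset α) (c : R) :
    t.sum (fun p v => (if p ∈ S then c else 0) * v) = c * ∑ p ∈ S, (t p : R) := by
  simp only [Finsupp.sum, ite_mul, zero_mul, Finset.sum_ite_mem, Finset.mul_sum]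
  refine Finset.sum_subset Finset.inter_subset_right fun p _ hp => ?_
  simp [Finsupp.notMem_support_iff.mp fun h => hp (Finset.mem_inter.mpr ⟨h, ‹_›⟩)]

lemma Int.two_mul_natCast_choose_two (m : ℕ) : 2 * (m.choose 2 : ℤ) = m * (m - 1) := by
  have h : ((2 * (m.choose 2 : ℤ) : ℤ) : ℚ) = ((m * (m - 1) : ℤ) : ℚ) := by
    push_cast
    rw [Nat.cast_choose_two]
    ring
  exact_mod_cast h

lemma Int.two_mul_natCast_choose_two_sub_le (n k : ℕ) :
    2 * ((n - k).choose 2 : ℤ) ≤ ((n : ℤ) - k) * ((n : ℤ) - k - 1) := by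
  rcases le_total k n with hkn | hnk
  · rw [Int.two_mul_natCast_choose_two, Nat.cast_sub hkn]
  · have hnk' : (n : ℤ) ≤ k := by exact_mod_cast hnk
    rw [Nat.sub_eq_zero_of_le hnk, Nat.choose_zero_succ, Nat.cast_zero, mul_zero]
    nlinarith

def smallEquichromatic : Finset (ℕ × ℕ) :=
  {(1, 1), (1, 2), (2, 1), (2, 2), (2, 3), (3, 2), (3, 3)}

def lineWeight (p : ℕ × ℕ) : ℤ :=
  2 * ((p.1 : ℤ) * p.2) - 2 * ((p.1.choose 2 : ℤ) + p.2.choose 2)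
    + 2 * (if p.1 + p.2 = 2 ∨ p.1 + p.2 = 3 then 1 else 0)
    - 2 * (if 5 ≤ p.1 + p.2 then (p.1 : ℤ) + p.2 - 4 else 0)

lemma lineWeight_eq (i j : ℕ) :
    lineWeight (i, j) = (i : ℤ) + j - ((i : ℤ) - j) ^ 2
      + 2 * (if i + j = 2 ∨ i + j = 3 then 1 else 0)
      - 2 * (if 5 ≤ i + j then (i : ℤ) + j - 4 else 0) := by
  have hi := Int.two_mul_natCast_choose_two i
  have hj := Int.two_mul_natCast_choose_two j
  simp only [lineWeight]
  linear_combination -hi - hj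

lemma lineWeight_le (p : ℕ × ℕ) :
    lineWeight p ≤ if p ∈ smallEquichromatic then 4 else 0 := by
  obtain ⟨i, j⟩ := p
  rw [lineWeight_eq]
  by_cases hs : 8 ≤ i + j
  · have hs' : (8 : ℤ) ≤ i + j := by exact_mod_cast hs
    have hnot : (i, j) ∉ smallEquichromatic := by
      simp only [smallEquichromatic, Finset.mem_insert, Finset.mem_singleton, Prod.mk.injEq]
      omega
    rw [if_neg (by omega), if_pos (by omega), if_neg hnot]
    nlinarith [sq_nonneg ((i : ℤ) - j)]
  · have hi : i ≤ 7 := by omega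
    have hj : j ≤ 7 := by omega
    interval_cases i <;> interval_cases j <;> simp [smallEquichromatic]

lemma sum_lineWeight_mul (t : (ℕ × ℕ) →₀ ℕ) :
    t.sum (fun p v => lineWeight p * v)
      = 2 * t.sum (fun p v => (p.1 : ℤ) * (p.2 : ℤ) * v)
        - 2 * t.sum (fun p v => ((p.1.choose 2 : ℤ) + (p.2.choose 2 : ℤ)) * v)
        + 2 * t.sum (fun p v => if p.1 + p.2 = 2 ∨ p.1 + p.2 = 3 then (v : ℤ) else 0)
        - 2 * t.sum (fun p v => if 5 ≤ p.1 + p.2 then ((p.1 : ℤ) + p.2 - 4) * v else 0) := by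
  simp only [Finsupp.sum, Finset.mul_sum, ← Finset.sum_sub_distrib, ← Finset.sum_add_distrib]
  refine Finset.sum_congr rfl fun p _ => ?_
  simp only [lineWeight]
  split_ifs <;> ring

theorem stmt_5_general (n k : ℕ) (t : (ℕ × ℕ) →₀ ℕ)
    (ha : t.sum (fun p v => (p.1 : ℤ) * (p.2 : ℤ) * v) = (n : ℤ) * ((n : ℤ) - k))
    (hb : t.sum (fun p v => ((p.1.choose 2 : ℤ) + (p.2.choose 2 : ℤ)) * v)
        = (n.choose 2 : ℤ) + ((n - k).choose 2 : ℤ))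
    (hc : t.sum (fun p v => if p.1 + p.2 = 2 ∨ p.1 + p.2 = 3 then (v : ℤ) else 0)
        ≥ (2 * (n : ℤ) - k)
          + t.sum (fun p v => if 5 ≤ p.1 + p.2 then ((p.1 : ℤ) + p.2 - 4) * v else 0)) :
    ((t (1, 1) + t (1, 2) + t (2, 1) + t (2, 2) + t (2, 3) + t (3, 2) + t (3, 3) : ℕ) : ℚ)
      ≥ (6 * (n : ℚ) - (k : ℚ) * (k + 3)) / 4 := by
  have hupper : t.sum (fun p v => lineWeight p * v)
      ≤ 4 * ((t (1, 1) + t (1, 2) + t (2, 1) + t (2, 2) + t (2, 3) + t (3, 2) + t (3, 3) : ℕ) : ℤ) := by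
    calc t.sum (fun p v => lineWeight p * v)
        ≤ t.sum (fun p v => (if p ∈ smallEquichromatic then (4 : ℤ) else 0) * v) :=
          Finsupp.sum_mul_le_sum_mul t lineWeight_le
      _ = _ := by
          rw [Finsupp.sum_ite_mem_mul]
          simp [smallEquichromatic, add_assoc]
  have hn := Int.two_mul_natCast_choose_two n
  have hnk := Int.two_mul_natCast_choose_two_sub_le n k
  have key : 6 * (n : ℤ) - k * (k + 3)
      ≤ 4 * ((t (1, 1) + t (1, 2) + t (2, 1) + t (2, 2) + t (2, 3) + t (3, 2) + t (3, 3) : ℕ) : ℤ) := by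
    rw [sum_lineWeight_mul, ha, hb] at hupper
    linarith
  rw [ge_iff_le, div_le_iff₀ (by norm_num), mul_comm (_ : ℚ) 4]
  exact_mod_cast key

/-- From the bichromatic and monochromatic pair-counting identities for `n` green and
`n - k` red points, together with Hirzebruch's inequality, the number of
1-equichromatic lines through at most six points is at least `(6n - k(k+3))/4`. -/
theorem stmt_5 (n k : ℕ) (hk : k ≤ n) (t : (ℕ × ℕ) →₀ ℕ)
    (hsupp : ∀ p ∈ t.support, 2 ≤ p.1 + p.2)
    (ha : t.sum (fun p v => (p.1 : ℤ) * (p.2 : ℤ) * v) = (n : ℤ) * ((n : ℤ) - k))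
    (hb : t.sum (fun p v => ((p.1.choose 2 : ℤ) + (p.2.choose 2 : ℤ)) * v)
        = (n.choose 2 : ℤ) + ((n - k).choose 2 : ℤ))
    (hc : t.sum (fun p v => if p.1 + p.2 = 2 ∨ p.1 + p.2 = 3 then (v : ℤ) else 0)
        ≥ (2 * (n : ℤ) - k)
          + t.sum (fun p v => if 5 ≤ p.1 + p.2 then ((p.1 : ℤ) + p.2 - 4) * v else 0)) :
    ((t (1, 1) + t (1, 2) + t (2, 1) + t (2, 2) + t (2, 3) + t (3, 2) + t (3, 3) : ℕ) : ℚ)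
      ≥ (6 * (n : ℚ) - (k : ℚ) * (k + 3)) / 4 :=
  stmt_5_general n k t ha hb hc
end

section
/- Let P be a finite set of points in the real (or complex) plane consisting of n green and n−k red points, not all collinear, and suppose the pair-counting identities hold together with Melchior's inequality Σ_{m≥2}(3−m)t_m ≥ 3 (where t_m is the number of lines through exactly m points of P). Then the number of 1-equichromatic lines (lines with i ≥ 1 green and j ≥ 1 red points and |i−j| ≤ 1) through at most four points is at least (2n + 6 − k(k+1))/4. -/
open scoped Classical

/-- The finite set of lines determined by a finite point set `P` in the real plane. -/
noncomputable def detLines (P : Finset (ℝ × ℝ)) : Finset (AffineSubspace ℝ (ℝ × ℝ)) :=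
  ((P ×ˢ P).filter fun pq => pq.1 ≠ pq.2).image fun pq => affineSpan ℝ {pq.1, pq.2}

/-!
Give a line with `i` green and `j` red points the weight `6 - (i - j)² - (i + j)`. Summing over
all lines, `2 ∑ i j` and `∑ (i(i-1) + j(j-1))` are fixed by the pair-counting identities and
`∑ (3 - (i + j)) ≥ 3` by Melchior, so the total weight is at least `n + r + 6 - (n - r)²` for
`n` green and `r` red points. On the other hand a line through at least two points has weight
at most `4`, and weight at most `0` unless it is 1-equichromatic through at most four points.
-/

abbrev IsSmallEquichromatic (i j : ℕ) : Prop :=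
  1 ≤ i ∧ 1 ≤ j ∧ i ≤ j + 1 ∧ j ≤ i + 1 ∧ i + j ≤ 4

lemma six_sub_sq_sub_sub_le {i j : ℕ} (h : 2 ≤ i + j) :
    6 - ((i : ℚ) - j) ^ 2 - (i + j) ≤ if IsSmallEquichromatic i j then 4 else 0 := by
  have hsum : (2 : ℚ) ≤ i + j := by exact_mod_cast h
  split_ifs with hsmall
  · nlinarith [sq_nonneg ((i : ℚ) - j)]
  · -- if `|i - j| ≤ 1` then `i + j ≥ 5`, and `i + j ≥ 6` when `i = j`
    suffices 6 ≤ ((i : ℤ) - j) ^ 2 + (i + j) by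
      have := (Int.cast_le (R := ℚ)).mpr this
      push_cast at this
      linarith
    obtain hd | hd | hd | hd | hd : (i : ℤ) - j ≤ -2 ∨ (i : ℤ) - j = -1 ∨ (i : ℤ) - j = 0 ∨
        (i : ℤ) - j = 1 ∨ 2 ≤ (i : ℤ) - j := by omega
    · nlinarith
    · rw [hd]; omega
    · rw [hd]; omega
    · rw [hd]; omega
    · nlinarith

theorem four_mul_card_filter_isSmallEquichromatic_ge {ι : Type*} (L : Finset ι)
    (g r : ι → ℕ) (N M : ℕ) (htwo : ∀ l ∈ L, 2 ≤ g l + r l)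
    (hbi : ∑ l ∈ L, g l * r l = N * M)
    (hmono : ∑ l ∈ L, ((g l).choose 2 + (r l).choose 2) = N.choose 2 + M.choose 2)
    (hmel : 3 ≤ ∑ l ∈ L, (3 - ((g l : ℤ) + r l))) :
    (N : ℚ) + M + 6 - ((N : ℚ) - M) ^ 2 ≤
      4 * ((L.filter fun l => IsSmallEquichromatic (g l) (r l)).card : ℚ) := by
  have hbi' : ∑ l ∈ L, ((g l : ℚ) * r l) = N * M := by
    exact_mod_cast congrArg (Nat.cast (R := ℚ)) hbi
  have hmono' : ∑ l ∈ L, (((g l).choose 2 : ℚ) + (r l).choose 2) = N.choose 2 + M.choose 2 := by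
    exact_mod_cast congrArg (Nat.cast (R := ℚ)) hmono
  have hmel' : (3 : ℚ) ≤ ∑ l ∈ L, (3 - ((g l : ℚ) + r l)) := by
    exact_mod_cast (Int.cast_le (R := ℚ)).mpr hmel
  have hweight : ∑ l ∈ L, (6 - ((g l : ℚ) - r l) ^ 2 - (g l + r l)) =
      2 * ∑ l ∈ L, ((g l : ℚ) * r l) - 2 * ∑ l ∈ L, (((g l).choose 2 : ℚ) + (r l).choose 2)
        + 2 * ∑ l ∈ L, (3 - ((g l : ℚ) + r l)) := by
    simp only [Finset.mul_sum, ← Finset.sum_sub_distrib, ← Finset.sum_add_distrib,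
      Nat.cast_choose_two]
    exact Finset.sum_congr rfl fun l _ => by ring
  calc (N : ℚ) + M + 6 - ((N : ℚ) - M) ^ 2
      ≤ ∑ l ∈ L, (6 - ((g l : ℚ) - r l) ^ 2 - (g l + r l)) := by
        rw [hweight, hbi', hmono', Nat.cast_choose_two, Nat.cast_choose_two]
        linarith
    _ ≤ ∑ l ∈ L, if IsSmallEquichromatic (g l) (r l) then (4 : ℚ) else 0 :=
        Finset.sum_le_sum fun l hl => six_sub_sq_sub_sub_le (htwo l hl)
    _ = _ := by rw [← Finset.sum_filter, Finset.sum_const, nsmul_eq_mul, mul_comm]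

lemma two_le_card_filter_mem_of_mem_detLines {P : Finset (ℝ × ℝ)}
    {l : AffineSubspace ℝ (ℝ × ℝ)} (hl : l ∈ detLines P) : 2 ≤ (P.filter (· ∈ l)).card := by
  simp only [detLines, Finset.mem_image, Finset.mem_filter, Finset.mem_product] at hl
  obtain ⟨⟨p, q⟩, ⟨⟨hp, hq⟩, hpq⟩, rfl⟩ := hl
  have hspan : ({p, q} : Set (ℝ × ℝ)) ⊆ affineSpan ℝ {p, q} := subset_affineSpan ℝ _
  calc 2 = ({p, q} : Finset (ℝ × ℝ)).card := (Finset.card_pair hpq).symm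
    _ ≤ _ := Finset.card_le_card <| Finset.insert_subset_iff.mpr
        ⟨Finset.mem_filter.mpr ⟨hp, hspan (by simp)⟩,
          Finset.singleton_subset_iff.mpr (Finset.mem_filter.mpr ⟨hq, hspan (by simp)⟩)⟩

theorem stmt_9_general (n k : ℕ) (hk : k ≤ n) (G R : Finset (ℝ × ℝ)) (hGR : Disjoint G R)
    (hG : G.card = n) (hR : R.card = n - k)
    (hbi : ∑ l ∈ detLines (G ∪ R),
        (G.filter (fun p => p ∈ l)).card * (R.filter (fun p => p ∈ l)).card
      = G.card * R.card)
    (hmono : ∑ l ∈ detLines (G ∪ R),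
        ((G.filter (fun p => p ∈ l)).card.choose 2 + (R.filter (fun p => p ∈ l)).card.choose 2)
      = G.card.choose 2 + R.card.choose 2)
    (hmel : ∑ l ∈ detLines (G ∪ R),
        (3 - (((G ∪ R).filter (fun p => p ∈ l)).card : ℤ)) ≥ 3) :
    (((detLines (G ∪ R)).filter (fun l =>
        1 ≤ (G.filter (fun p => p ∈ l)).card ∧ 1 ≤ (R.filter (fun p => p ∈ l)).card
        ∧ (G.filter (fun p => p ∈ l)).card ≤ (R.filter (fun p => p ∈ l)).card + 1
        ∧ (R.filter (fun p => p ∈ l)).card ≤ (G.filter (fun p => p ∈ l)).card + 1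
        ∧ (G.filter (fun p => p ∈ l)).card + (R.filter (fun p => p ∈ l)).card ≤ 4)).card : ℚ)
      ≥ (2 * (n : ℚ) + 6 - (k : ℚ) * (k + 1)) / 4 := by
  have hcard_union (l : AffineSubspace ℝ (ℝ × ℝ)) :
      ((G ∪ R).filter (· ∈ l)).card = (G.filter (· ∈ l)).card + (R.filter (· ∈ l)).card := by
    rw [Finset.filter_union, Finset.card_union_of_disjoint (Finset.disjoint_filter_filter hGR)]
  have key := four_mul_card_filter_isSmallEquichromatic_ge (detLines (G ∪ R))
    (fun l => (G.filter (· ∈ l)).card) (fun l => (R.filter (· ∈ l)).card) G.card R.card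
    (fun l hl => hcard_union l ▸ two_le_card_filter_mem_of_mem_detLines hl) hbi hmono
    (by simpa only [hcard_union, Nat.cast_add] using hmel)
  rw [hG, hR, Nat.cast_sub hk] at key
  rw [ge_iff_le, div_le_iff₀ four_pos]
  linarith

/-- Purdy–Smith Theorem 2: for `n` green and `n - k` red points in the real plane, not
all collinear, assuming the pair-counting identities and Melchior's inequality, the
number of 1-equichromatic lines through at most four points is at least
`(2n + 6 - k(k+1))/4`. -/
theorem stmt_9 (n k : ℕ) (hk : k ≤ n) (G R : Finset (ℝ × ℝ)) (hGR : Disjoint G R)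
    (hG : G.card = n) (hR : R.card = n - k)
    (hncol : ¬ Collinear ℝ ((G ∪ R : Finset (ℝ × ℝ)) : Set (ℝ × ℝ)))
    (hbi : ∑ l ∈ detLines (G ∪ R),
        (G.filter (fun p => p ∈ l)).card * (R.filter (fun p => p ∈ l)).card
      = G.card * R.card)
    (hmono : ∑ l ∈ detLines (G ∪ R),
        ((G.filter (fun p => p ∈ l)).card.choose 2 + (R.filter (fun p => p ∈ l)).card.choose 2)
      = G.card.choose 2 + R.card.choose 2)
    (hmel : ∑ l ∈ detLines (G ∪ R),
        (3 - (((G ∪ R).filter (fun p => p ∈ l)).card : ℤ)) ≥ 3) :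
    (((detLines (G ∪ R)).filter (fun l =>
        1 ≤ (G.filter (fun p => p ∈ l)).card ∧ 1 ≤ (R.filter (fun p => p ∈ l)).card
        ∧ (G.filter (fun p => p ∈ l)).card ≤ (R.filter (fun p => p ∈ l)).card + 1
        ∧ (R.filter (fun p => p ∈ l)).card ≤ (G.filter (fun p => p ∈ l)).card + 1
        ∧ (G.filter (fun p => p ∈ l)).card + (R.filter (fun p => p ∈ l)).card ≤ 4)).card : ℚ)
      ≥ (2 * (n : ℚ) + 6 - (k : ℚ) * (k + 1)) / 4 :=
  stmt_9_general n k hk G R hGR hG hR hbi hmono hmel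
end

section
/- Suppose nonnegative integers t_{i,j} (finitely supported, i+j ≥ 2) satisfy Σ ij·t_{i,j} = n(n−k), Σ (C(i,2)+C(j,2))·t_{i,j} = C(n,2)+C(n−k,2), and Melchior's inequality Σ (3−(i+j))·t_{i,j} ≥ 3. Then the total number of 1-equichromatic lines, i.e. Σ over pairs with |i−j| ≤ 1 and i,j ≥ 1 of t_{i,j}, is at least (t + 2n + 3 − k(k+1))/4, where t = Σ t_{i,j} is the total number of lines. -/
/-!
For a line with `i` points of one colour and `j` of the other,
`(i - j)² = 2 (C(i,2) + C(j,2)) - 2ij + 3 - (3 - (i + j))`, so the two pair-counting identities and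
Melchior's inequality give `∑ (i - j)² t_{i,j} ≤ 3t - 3 + k(k+1) - 2n`. On the other hand
`(i - j)² ≥ 4` on every line with `i + j ≥ 2` that is not 1-equichromatic, so
`4t ≤ ∑ (i - j)² t_{i,j} + 4 · #(1-equichromatic lines)`.
-/

lemma sq_sub_eq_choose_two {K : Type*} [Field K] [NeZero (2 : K)] (i j : ℕ) :
    ((i : K) - j) ^ 2 = 2 * ((i.choose 2 : K) + j.choose 2) - 2 * (i * j) + 3 - (3 - (i + j)) := by
  rw [Nat.cast_choose_two, Nat.cast_choose_two]
  field_simp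
  ring

lemma sum_sq_sub_mul_eq {α : Type*} (t : α →₀ ℕ) (i j : α → ℕ) :
    t.sum (fun p v => ((i p : ℚ) - j p) ^ 2 * v) =
      2 * t.sum (fun p v => ((i p).choose 2 + (j p).choose 2 : ℚ) * v)
        - 2 * t.sum (fun p v => (i p * j p : ℚ) * v) + 3 * t.sum (fun _ v => (v : ℚ))
        - t.sum (fun p v => (3 - (i p + j p : ℚ)) * v) := by
  simp only [Finsupp.sum, Finset.mul_sum, ← Finset.sum_sub_distrib, ← Finset.sum_add_distrib]
  refine Finset.sum_congr rfl fun p _ => ?_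
  rw [sq_sub_eq_choose_two]
  ring

lemma four_le_sq_sub_add_ite {i j : ℕ} (h : 2 ≤ i + j) :
    (4 : ℚ) ≤ ((i : ℚ) - j) ^ 2 + if 1 ≤ i ∧ 1 ≤ j ∧ i ≤ j + 1 ∧ j ≤ i + 1 then 4 else 0 := by
  split_ifs with hij
  · nlinarith [sq_nonneg ((i : ℚ) - j)]
  · have hgap : (i : ℚ) + 2 ≤ j ∨ (j : ℚ) + 2 ≤ i := by
      rcases (show i + 2 ≤ j ∨ j + 2 ≤ i by omega) with h | h
      · exact Or.inl (by exact_mod_cast h)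
      · exact Or.inr (by exact_mod_cast h)
    rcases hgap with h | h <;> nlinarith

lemma four_mul_sum_le_sum_sq_sub_mul_add (t : (ℕ × ℕ) →₀ ℕ)
    (hsupp : ∀ p ∈ t.support, 2 ≤ p.1 + p.2) :
    4 * t.sum (fun _ v => (v : ℚ)) ≤ t.sum (fun p v => ((p.1 : ℚ) - p.2) ^ 2 * v) +
      4 * t.sum (fun p v =>
        if 1 ≤ p.1 ∧ 1 ≤ p.2 ∧ p.1 ≤ p.2 + 1 ∧ p.2 ≤ p.1 + 1 then (v : ℚ) else 0) := by
  rw [Finsupp.mul_sum, Finsupp.mul_sum, ← Finsupp.sum_add]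
  refine Finsupp.sum_le_sum fun p hp => ?_
  have h := four_le_sq_sub_add_ite (hsupp p hp)
  split_ifs at h ⊢ <;> nlinarith [(t p).cast_nonneg (α := ℚ)]

lemma Finsupp.intCast_sum {α : Type*} (t : α →₀ ℕ) (g : α → ℕ → ℤ) :
    ((t.sum g : ℤ) : ℚ) = t.sum fun a v => (g a v : ℚ) :=
  map_finsuppSum (Int.castRingHom ℚ) t g

/-- Abstract version of Purdy–Smith Theorem 1: from the two pair-counting identities
and Melchior's inequality, the total number of 1-equichromatic lines is at least
`(t + 2n + 3 - k(k+1))/4`, where `t` is the total number of lines. -/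
theorem stmt_10 (n k : ℕ) (hk : k ≤ n) (t : (ℕ × ℕ) →₀ ℕ)
    (hsupp : ∀ p ∈ t.support, 2 ≤ p.1 + p.2)
    (ha : t.sum (fun p v => (p.1 : ℤ) * (p.2 : ℤ) * v) = (n : ℤ) * ((n : ℤ) - k))
    (hb : t.sum (fun p v => ((p.1.choose 2 : ℤ) + (p.2.choose 2 : ℤ)) * v)
        = (n.choose 2 : ℤ) + ((n - k).choose 2 : ℤ))
    (hmel : t.sum (fun p v => (3 - ((p.1 : ℤ) + p.2)) * v) ≥ 3) :
    t.sum (fun p v => if 1 ≤ p.1 ∧ 1 ≤ p.2 ∧ p.1 ≤ p.2 + 1 ∧ p.2 ≤ p.1 + 1 then (v : ℚ) else 0)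
      ≥ ((t.sum fun _ v => (v : ℚ)) + 2 * (n : ℚ) + 3 - (k : ℚ) * (k + 1)) / 4 := by
  replace ha := congrArg (Int.cast : ℤ → ℚ) ha
  replace hb := congrArg (Int.cast : ℤ → ℚ) hb
  replace hmel : ((3 : ℤ) : ℚ) ≤ _ := Int.cast_le.mpr hmel
  rw [Finsupp.intCast_sum] at ha hb hmel
  push_cast at ha hb hmel
  have hn := Nat.cast_choose_two ℚ n
  have hnk := Nat.cast_choose_two ℚ (n - k)
  rw [Nat.cast_sub hk] at hnk
  have hsq := sum_sq_sub_mul_eq t Prod.fst Prod.snd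
  have hcount := four_mul_sum_le_sum_sq_sub_mul_add t hsupp
  rw [ge_iff_le, div_le_iff₀ four_pos]
  linarith
end

section
/- Suppose nonnegative integers t_{i,j} (finitely supported, i+j ≥ 2) satisfy Σ ij·t_{i,j} = n(n−k), Σ (C(i,2)+C(j,2))·t_{i,j} = C(n,2)+C(n−k,2), and Melchior's inequality Σ(3−(i+j))t_{i,j} ≥ 3. Then the number of 1-equichromatic lines through at most six points, counted with appropriate weight, satisfies: Σ over (i,j) with |i−j| ≤ 1, i,j ≥ 1, i+j ≤ 6 of t_{i,j} is at least (t + 6n + 15 − 3k(k+1))/12, where t = Σ t_{i,j}. -/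
/-!
Weight a line of type `(i, j)` by `w(i, j) = 16 - 3(i - j)² - 2(i + j)`, which equals
`1 + 5(3 - (i + j)) - 6(C(i,2) + C(j,2)) + 6ij`. Summed against `t`, the two counting identities
and Melchior's inequality give `Σ w t_{i,j} ≥ t + 6n + 15 - 3k(k+1)`. On the other hand `w ≤ 12`
at the seven small 1-equichromatic pairs and `w ≤ 0` at every other pair with `i + j ≥ 2`.
-/

open Finset

namespace PurdySmith

def smallEquichromaticPairs : Finset (ℕ × ℕ) :=
  {(1, 1), (1, 2), (2, 1), (2, 2), (2, 3), (3, 2), (3, 3)}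

def weight (p : ℕ × ℕ) : ℚ := 16 - 3 * ((p.1 : ℚ) - p.2) ^ 2 - 2 * ((p.1 : ℚ) + p.2)

lemma weight_eq (p : ℕ × ℕ) :
    weight p = 1 + 5 * (3 - ((p.1 : ℚ) + p.2)) - 6 * ((p.1.choose 2 : ℚ) + p.2.choose 2)
      + 6 * ((p.1 : ℚ) * p.2) := by
  rw [weight, Nat.cast_choose_two, Nat.cast_choose_two]
  ring

lemma weight_le_twelve {p : ℕ × ℕ} (hp : 2 ≤ p.1 + p.2) : weight p ≤ 12 := by
  have : (2 : ℚ) ≤ p.1 + p.2 := by exact_mod_cast hp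
  rw [weight]
  nlinarith [sq_nonneg ((p.1 : ℚ) - p.2)]

lemma sixteen_le_of_notMem_smallEquichromaticPairs {i j : ℕ} (hij : 2 ≤ i + j)
    (hE : (i, j) ∉ smallEquichromaticPairs) : 16 ≤ 3 * ((i : ℤ) - j) ^ 2 + 2 * (i + j) := by
  rcases lt_or_ge (i + j) 7 with hsmall | hlarge
  · have : i ≤ 6 := by omega
    have : j ≤ 6 := by omega
    interval_cases i <;> interval_cases j <;> simp_all [smallEquichromaticPairs]
  · rcases eq_or_ne i j with rfl | hne
    · have : (8 : ℤ) ≤ i + i := by omega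
      nlinarith
    · have : (1 : ℤ) ≤ ((i : ℤ) - j) ^ 2 := by
        have : (i : ℤ) - j ≠ 0 := by omega
        nlinarith [sq_pos_of_ne_zero this]
      have : (7 : ℤ) ≤ i + j := by omega
      linarith

lemma weight_nonpos {p : ℕ × ℕ} (hp : 2 ≤ p.1 + p.2) (hE : p ∉ smallEquichromaticPairs) :
    weight p ≤ 0 := by
  have := sixteen_le_of_notMem_smallEquichromaticPairs hp hE
  rw [weight]
  exact_mod_cast (by linarith : (16 : ℤ) - 3 * ((p.1 : ℤ) - p.2) ^ 2 - 2 * (p.1 + p.2) ≤ 0)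

lemma weight_mul_le (p : ℕ × ℕ) (hp : 2 ≤ p.1 + p.2) {c : ℚ} (hc : 0 ≤ c) :
    weight p * c ≤ if p ∈ smallEquichromaticPairs then 12 * c else 0 := by
  split_ifs with hE
  · exact mul_le_mul_of_nonneg_right (weight_le_twelve hp) hc
  · exact mul_nonpos_of_nonpos_of_nonneg (weight_nonpos hp hE) hc

variable (s : Finset (ℕ × ℕ)) (c : ℕ × ℕ → ℚ)

lemma sum_weight_mul_eq :
    ∑ p ∈ s, weight p * c p = ∑ p ∈ s, c p + 5 * ∑ p ∈ s, (3 - ((p.1 : ℚ) + p.2)) * c p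
      - 6 * ∑ p ∈ s, ((p.1.choose 2 : ℚ) + p.2.choose 2) * c p
      + 6 * ∑ p ∈ s, (p.1 : ℚ) * p.2 * c p := by
  simp only [mul_sum, ← sum_add_distrib, ← sum_sub_distrib]
  exact sum_congr rfl fun p _ => by rw [weight_eq]; ring

lemma sum_weight_mul_le (hs : ∀ p ∈ s, 2 ≤ p.1 + p.2) (hc : 0 ≤ c) :
    ∑ p ∈ s, weight p * c p ≤ 12 * ∑ p ∈ smallEquichromaticPairs, c p :=
  calc ∑ p ∈ s, weight p * c p
      ≤ ∑ p ∈ s, if p ∈ smallEquichromaticPairs then 12 * c p else 0 :=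
        sum_le_sum fun p hp => weight_mul_le p (hs p hp) (hc p)
    _ = 12 * ∑ p ∈ s with p ∈ smallEquichromaticPairs, c p := by rw [← sum_filter, mul_sum]
    _ ≤ 12 * ∑ p ∈ smallEquichromaticPairs, c p := by
        gcongr
        · exact fun p _ _ => hc p
        · exact fun p hp => (mem_filter.mp hp).2

lemma sum_smallEquichromaticPairs :
    ∑ p ∈ smallEquichromaticPairs, c p
      = c (1, 1) + c (1, 2) + c (2, 1) + c (2, 2) + c (2, 3) + c (3, 2) + c (3, 3) := by
  simp [smallEquichromaticPairs, add_assoc]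

end PurdySmith

open PurdySmith in
/-- Abstract version of Purdy–Smith Theorem 4: from the two pair-counting identities
and Melchior's inequality, the number of 1-equichromatic lines through at most six
points is at least `(t + 6n + 15 - 3k(k+1))/12`, where `t` is the total number of lines. -/
theorem stmt_15 (n k : ℕ) (hk : k ≤ n) (t : (ℕ × ℕ) →₀ ℕ)
    (hsupp : ∀ p ∈ t.support, 2 ≤ p.1 + p.2)
    (ha : t.sum (fun p v => (p.1 : ℤ) * (p.2 : ℤ) * v) = (n : ℤ) * ((n : ℤ) - k))
    (hb : t.sum (fun p v => ((p.1.choose 2 : ℤ) + (p.2.choose 2 : ℤ)) * v)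
        = (n.choose 2 : ℤ) + ((n - k).choose 2 : ℤ))
    (hmel : t.sum (fun p v => (3 - ((p.1 : ℤ) + p.2)) * v) ≥ 3) :
    ((t (1, 1) + t (1, 2) + t (2, 1) + t (2, 2) + t (2, 3) + t (3, 2) + t (3, 3) : ℕ) : ℚ)
      ≥ ((t.sum fun _ v => (v : ℚ)) + 6 * (n : ℚ) + 15 - 3 * (k : ℚ) * (k + 1)) / 12 := by
  simp only [Finsupp.sum] at ha hb hmel ⊢
  have hA : ∑ p ∈ t.support, (p.1 : ℚ) * p.2 * t p = n * (n - k) := by exact_mod_cast ha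
  have hB : ∑ p ∈ t.support, ((p.1.choose 2 : ℚ) + p.2.choose 2) * t p
      = n * (n - 1) / 2 + (n - k) * (n - k - 1) / 2 := by
    rw [← Nat.cast_sub hk, ← Nat.cast_choose_two, ← Nat.cast_choose_two]
    exact_mod_cast hb
  have hM : 3 ≤ ∑ p ∈ t.support, (3 - ((p.1 : ℚ) + p.2)) * t p := by exact_mod_cast hmel
  have hlow := sum_weight_mul_eq t.support (fun p => (t p : ℚ))
  have hup := sum_weight_mul_le t.support (fun p => (t p : ℚ)) hsupp fun p => by positivity
  rw [sum_smallEquichromaticPairs] at hup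
  push_cast
  rw [ge_iff_le, div_le_iff₀ (by norm_num)]
  linear_combination hup - hlow + 5 * hM + 6 * hB - 6 * hA
end
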